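/- Let (X, f) be a dynamical system, where X is a compact uniform space and f : X → X is a continuous surjection, and let E and D be entourages such that every D-pseudo orbit contained in CR(f) can be E-traced by some point of X. If T ⊆ ℕ is a thick set and (x_i)_{i∈ℕ} is a sequence with all x_i ∈ CR(f) which is a D-pseudo orbit on T, then there exist a thick set T' ⊆ T and a point z ∈ X such that (f^j(z), x_j) ∈ E for every j ∈ T'. -/

import Mathlib

open Filter Set Function

section Defs

variable {X : Type*} [UniformSpace X]

/-- A `D`-chain from `x` to `y`: a finite sequence `x = c 0, c 1, …, c n` (`n ≥ 1`)
with `c n = y` and `(f (c i), c (i+1)) ∈ D` for all `i < n`. -/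
def DChain (f : X → X) (D : Set (X × X)) (x y : X) : Prop :=
  ∃ n : ℕ, 1 ≤ n ∧ ∃ c : ℕ → X, c 0 = x ∧ c n = y ∧ ∀ i < n, (f (c i), c (i + 1)) ∈ D

/-- A `D`-chain from `x` to `y` contained in the set `S`. -/
def DChainIn (f : X → X) (D : Set (X × X)) (S : Set X) (x y : X) : Prop :=
  ∃ n : ℕ, 1 ≤ n ∧ ∃ c : ℕ → X, c 0 = x ∧ c n = y ∧ (∀ i ≤ n, c i ∈ S) ∧
    ∀ i < n, (f (c i), c (i + 1)) ∈ D

/-- The set of chain-recurrent points of `f`. -/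
def CR (f : X → X) : Set X :=
  {x | ∀ D ∈ uniformity X, DChain f D x x}

/-- The set of non-wandering points of `f`. -/
def NonWandering (f : X → X) : Set X :=
  {x | ∀ U : Set X, IsOpen U → x ∈ U → ∃ n : ℕ, 1 ≤ n ∧ (f^[n] '' U ∩ U).Nonempty}

/-- `(x i)` is a `D`-pseudo orbit on the set `A ⊆ ℕ`. -/
def PseudoOrbitOn (f : X → X) (D : Set (X × X)) (x : ℕ → X) (A : Set ℕ) : Prop :=
  ∀ i ∈ A, (f (x i), x (i + 1)) ∈ D

/-- `(x i)` is `E`-traced by `y` on the set `B ⊆ ℕ`. -/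
def TracedOn (f : X → X) (E : Set (X × X)) (x : ℕ → X) (y : X) (B : Set ℕ) : Prop :=
  ∀ i ∈ B, (f^[i] y, x i) ∈ E

/-- Topological shadowing. -/
def TopShadowing (f : X → X) : Prop :=
  ∀ E ∈ uniformity X, ∃ D ∈ uniformity X,
    ∀ x : ℕ → X, PseudoOrbitOn f D x Set.univ → ∃ y : X, TracedOn f E x y Set.univ

/-- Topological `(F, G)`-shadowing for families `F`, `G` of subsets of `ℕ`. -/
def FGShadowing (f : X → X) (F G : Set (Set ℕ)) : Prop :=
  ∀ E ∈ uniformity X, ∃ D ∈ uniformity X,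
    ∀ x : ℕ → X, (∃ A ∈ F, PseudoOrbitOn f D x A) →
      ∃ y : X, ∃ B ∈ G, TracedOn f E x y B

end Defs

/-- A set `A ⊆ ℕ` is syndetic: gaps are bounded. -/
def Syndetic (A : Set ℕ) : Prop :=
  ∃ M : ℕ, ∀ k : ℕ, ∃ j ∈ A, k ≤ j ∧ j ≤ k + M

/-- A set `A ⊆ ℕ` is thick: contains arbitrarily long blocks of consecutive numbers. -/
def Thick (A : Set ℕ) : Prop :=
  ∀ n : ℕ, ∃ k : ℕ, ∀ i < n, k + i ∈ A

/-- A set `A ⊆ ℕ` is thickly syndetic. -/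
def ThicklySyndetic (A : Set ℕ) : Prop :=
  ∀ n : ℕ, Syndetic {k : ℕ | ∀ i < n, k + i ∈ A}

/-- A set `A ⊆ ℕ` is piecewise syndetic. -/
def PiecewiseSyndetic (A : Set ℕ) : Prop :=
  ∃ T S : Set ℕ, Thick T ∧ Syndetic S ∧ A = T ∩ S

/-- The family of thick subsets of `ℕ`. -/
def thickFamily : Set (Set ℕ) := {A | Thick A}

/-- The family of piecewise syndetic subsets of `ℕ`. -/
def psFamily : Set (Set ℕ) := {A | PiecewiseSyndetic A}

open scoped Classical in
/-- The lower density of a subset of `ℕ`. -/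
noncomputable def lowerDensity (A : Set ℕ) : ℝ :=
  Filter.atTop.liminf fun n : ℕ => ((Finset.range n).filter (· ∈ A)).card / (n : ℝ)

/-- The family of subsets of `ℕ` of lower density `1`. -/
noncomputable def densityOneFamily : Set (Set ℕ) := {A | lowerDensity A = 1}

section Dyn

variable {X : Type*} [UniformSpace X]

/-- `x` is a minimal point of `f`. -/
def MinimalPt (f : X → X) (x : X) : Prop :=
  ∀ U : Set X, IsOpen U → x ∈ U → Syndetic {n : ℕ | f^[n] x ∈ U}

/-- `(x, y)` is a syndetically proximal pair for `f`. -/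
def SyndProx (f : X → X) (x y : X) : Prop :=
  ∀ E ∈ uniformity X, Syndetic {n : ℕ | (f^[n] x, f^[n] y) ∈ E}

end Dyn

/-!
Since `X` is compact, every chain-recurrent point `w` lies on arbitrarily fine chains from `w`
to `w` that stay inside `CR f`: the points lying on fine loops through `w` accumulate only on
points which are themselves chain recurrent. Extend such a loop periodically.

Colour each index `j` by a point `x (ν j)` of a finite net of the sequence close to `x j`,
together with the phase of `j` along the periodic loop through `x (ν j)`. By pigeonhole, `T`
contains arbitrarily long intervals whose two endpoints have one and the same colour. Outside
the union of these intervals, replace `x` by the periodic loop, phase-matched so that it passes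
through the common net point at every endpoint: this is a `D`-pseudo orbit in `CR f`, and a
point tracing it traces `x` on the union, which is thick.
-/

open SetRel Topology Uniformity

section Chains

variable {X : Type*} {f : X → X} {U V : Set (X × X)} {a b c w : X}

theorem DChain.mono (h : DChain f U a b) (hUV : U ⊆ V) : DChain f V a b := by
  obtain ⟨n, hn, u, hu0, hun, hu⟩ := h
  exact ⟨n, hn, u, hu0, hun, fun i hi => hUV (hu i hi)⟩

theorem DChain.trans (h₁ : DChain f U a b) (h₂ : DChain f U b c) : DChain f U a c := by
  obtain ⟨m, hm, u, hu0, hum, hu⟩ := h₁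
  obtain ⟨n, hn, v, hv0, hvn, hv⟩ := h₂
  refine ⟨m + n, by omega, fun i => if i ≤ m then u i else v (i - m), by simp [hu0], ?_, ?_⟩
  · simp [show ¬m + n ≤ m by omega, hvn]
  · intro i hi
    rcases lt_trichotomy i m with him | rfl | him
    · simpa [him.le, Nat.succ_le_of_lt him] using hu i him
    · simpa [hum, ← hv0] using hv 0 hn
    · simpa [show ¬i ≤ m by omega, show ¬i + 1 ≤ m by omega, Nat.sub_add_comm him.le]
        using hv (i - m) (by omega)

def chainClass (f : X → X) (U : Set (X × X)) (w : X) : Set X :=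
  {p | DChain f U w p ∧ DChain f U p w}

theorem chainClass_mono (hUV : U ⊆ V) : chainClass f U w ⊆ chainClass f V w :=
  fun _ hp => ⟨hp.1.mono hUV, hp.2.mono hUV⟩

theorem mem_chainClass_of_loop {u : ℕ → X} {n i : ℕ} (hu0 : u 0 = w) (hun : u n = w)
    (hu : ∀ j < n, (f (u j), u (j + 1)) ∈ U) (hi0 : 0 < i) (hin : i < n) :
    u i ∈ chainClass f U w :=
  ⟨⟨i, hi0, u, hu0, rfl, fun j hj => hu j (by omega)⟩,
    ⟨n - i, by omega, fun j => u (i + j), by simp, by simp [hin.le, hun],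
      fun j hj => by simpa [add_assoc] using hu (i + j) (by omega)⟩⟩

theorem DChainIn.exists_periodic {S : Set X} (h : DChainIn f V S w w) :
    ∃ n, 0 < n ∧ ∀ r, ∃ ℓ : ℕ → X, (∀ i, ℓ i ∈ S) ∧ PseudoOrbitOn f V ℓ univ ∧
      ∀ i, i ≡ r [MOD n] → ℓ i = w := by
  obtain ⟨n, hn, u, hu0, hun, huS, hu⟩ := h
  have hstep : ∀ m, (f (u (m % n)), u ((m + 1) % n)) ∈ V := by
    intro m
    have hm := Nat.mod_lt m hn
    rw [← Nat.mod_add_mod]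
    rcases (show m % n + 1 ≤ n from hm).eq_or_lt with hmn | hmn
    · have := hu (m % n) hm
      rw [hmn, hun] at this
      rwa [hmn, Nat.mod_self, hu0]
    · rw [Nat.mod_eq_of_lt hmn]
      exact hu _ hm
  refine ⟨n, hn, fun r => ⟨fun i => u ((i + (n - 1) * r) % n), fun i => huS _ (Nat.mod_lt _ hn).le,
    fun i _ => by simpa [add_right_comm] using hstep (i + (n - 1) * r), fun i hi => ?_⟩⟩
  have hnr : r + (n - 1) * r = n * r := by
    obtain ⟨k, rfl⟩ : ∃ k, n = k + 1 := ⟨n - 1, by omega⟩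
    simp only [Nat.add_sub_cancel]
    ring
  have h0 : i + (n - 1) * r ≡ 0 [MOD n] :=
    (hi.add_right _).trans (hnr ▸ Nat.modEq_zero_iff_dvd.2 (dvd_mul_right n r))
  simp only [Nat.ModEq] at h0
  simpa [h0] using hu0

variable [UniformSpace X]

theorem DChain.perturb_ends {W : Set (X × X)} (hW : W ∈ 𝓤 X) {a' b' : X} (h : DChain f U a b)
    (ha : (f a', f a) ∈ W) (hb : (b, b') ∈ W) : DChain f (W ○ U ○ W) a' b' := by
  obtain ⟨n, hn, u, rfl, rfl, hu⟩ := h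
  refine ⟨n, hn, fun i => if i = 0 then a' else if i = n then b' else u i, by simp,
    by simp [show n ≠ 0 by omega], fun i hi => ?_⟩
  refine prodMk_mem_comp (prodMk_mem_comp ?_ (hu i hi)) ?_
  · by_cases hi0 : i = 0
    · simpa [hi0] using ha
    · simpa [hi0, hi.ne] using refl_mem_uniformity hW
  · by_cases hin : i + 1 = n
    · simpa [hin, show n ≠ 0 by omega] using hb
    · simpa [hin] using refl_mem_uniformity hW

end Chains

section ChainRecurrence

variable {X : Type*} [UniformSpace X] {f : X → X} {U V : Set (X × X)} {w : X}

theorem mem_CR_of_forall_mem_closure_chainClass (hf : UniformContinuous f) {y : X}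
    (hy : ∀ U ∈ 𝓤 X, y ∈ closure (chainClass f U w)) : y ∈ CR f := by
  intro U hU
  obtain ⟨W, hW, hWsymm, hWU⟩ := comp_comp_symm_mem_uniformity_sets hU
  have hW' : W ∩ Prod.map f f ⁻¹' W ∈ 𝓤 X := inter_mem hW (hf hW)
  obtain ⟨p, hyp, hp⟩ := UniformSpace.mem_closure_iff_ball.1 (hy _ hW') hW'
  have hpp : DChain f W p p := (hp.2.trans hp.1).mono inter_subset_left
  exact (hpp.perturb_ends hW hyp.2 (hWsymm.symm _ _ hyp.1)).mono hWU

theorem exists_closure_chainClass_subset [CompactSpace X] (w : X) {N : Set X}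
    (hN : ∀ y ∈ ⋂ U ∈ 𝓤 X, closure (chainClass f U w), N ∈ 𝓝 y) :
    ∃ U ∈ 𝓤 X, closure (chainClass f U w) ⊆ N := by
  have : Nonempty {U // U ∈ 𝓤 X} := ⟨⟨univ, univ_mem⟩⟩
  obtain ⟨⟨U, hU⟩, hUN⟩ := exists_subset_nhds_of_isCompact'
    (V := fun U : {U // U ∈ 𝓤 X} => closure (chainClass f U w))
    (fun U V => ⟨⟨U ∩ V, inter_mem U.2 V.2⟩, closure_mono (chainClass_mono inter_subset_left),
      closure_mono (chainClass_mono inter_subset_right)⟩)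
    (fun _ => isClosed_closure.isCompact) (fun _ => isClosed_closure)
    (by simpa only [iInter_subtype] using hN)
  exact ⟨U, hU, hUN⟩

theorem dChainIn_CR_of_mem_CR [CompactSpace X] (hf : Continuous f) (hw : w ∈ CR f)
    (hV : V ∈ 𝓤 X) : DChainIn f V (CR f) w w := by
  have hfu := CompactSpace.uniformContinuous_of_continuous hf
  obtain ⟨V₁, hV₁, hV₁symm, hV₁V⟩ := comp_comp_symm_mem_uniformity_sets hV
  have hV₂ : V₁ ∩ Prod.map f f ⁻¹' V₁ ∈ 𝓤 X := inter_mem hV₁ (hfu hV₁)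
  set K := ⋂ U ∈ 𝓤 X, closure (chainClass f U w)
  have hKCR : K ⊆ CR f := fun y hy =>
    mem_CR_of_forall_mem_closure_chainClass hfu (mem_iInter₂.1 hy)
  have hwK : w ∈ K := mem_iInter₂.2 fun U hU => subset_closure ⟨hw U hU, hw U hU⟩
  obtain ⟨U, hU, hUK⟩ := exists_closure_chainClass_subset (f := f) w
    (N := {z | ∃ k ∈ K, (k, z) ∈ V₁ ∩ Prod.map f f ⁻¹' V₁}) fun k hk =>
      mem_of_superset (UniformSpace.ball_mem_nhds k hV₂) fun z hz => ⟨k, hk, hz⟩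
  obtain ⟨n, hn, u, hu0, hun, hu⟩ := hw (U ∩ V₁) (inter_mem hU hV₁)
  -- move each point of a fine loop through `w` to a nearby point of `K ⊆ CR f`
  have hclose : ∀ i, ∃ k ∈ K,
      (i ≤ n → (k, u i) ∈ V₁ ∩ Prod.map f f ⁻¹' V₁) ∧ (u i = w → k = w) := by
    intro i
    by_cases hiw : u i = w
    · exact ⟨w, hwK, fun _ => hiw ▸ refl_mem_uniformity hV₂, fun _ => rfl⟩
    by_cases hin : i ≤ n
    · have hi0 : 0 < i := Nat.pos_of_ne_zero (by rintro rfl; exact hiw hu0)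
      have hin' : i < n := lt_of_le_of_ne hin (by rintro rfl; exact hiw hun)
      obtain ⟨k, hk, hki⟩ := hUK <| subset_closure <|
        mem_chainClass_of_loop hu0 hun (fun j hj => (hu j hj).1) hi0 hin'
      exact ⟨k, hk, fun _ => hki, fun h => absurd h hiw⟩
    · exact ⟨w, hwK, fun h => absurd h hin, fun _ => rfl⟩
  choose k hkK hku hkw using hclose
  refine ⟨n, hn, k, hkw 0 hu0, hkw n hun, fun i _ => hKCR (hkK i), fun i hi => hV₁V ?_⟩
  exact prodMk_mem_comp (prodMk_mem_comp (hku i hi.le).2 (hu i hi).2)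
    (hV₁symm.symm _ _ (hku (i + 1) hi).1)

end ChainRecurrence

section Thick

/-- Pigeonhole along the progression `β, β + N, …, β + m N` inside a block of `T`, where `m` is
the number of colours. -/
theorem Thick.exists_Icc_subset_map_eq {T : Set ℕ} {C : Type*} (hT : Thick T) {χ : ℕ → C}
    (hχ : (range χ).Finite) (N : ℕ) : ∃ p q, p + N ≤ q ∧ Icc p q ⊆ T ∧ χ p = χ q := by
  classical
  set m := hχ.toFinset.card
  obtain ⟨β, hβ⟩ := hT (m * N + 1)
  obtain ⟨s, hs, t, ht, hst, heq⟩ := Finset.exists_ne_map_eq_of_card_lt_of_maps_to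
    (s := Finset.range (m + 1)) (t := hχ.toFinset) (f := fun s => χ (β + s * N)) (by simp [m])
    (fun s _ => by simp)
  wlog hlt : s < t generalizing s t
  · exact this t ht s hs hst.symm heq.symm (by omega)
  have htm : t * N ≤ m * N := Nat.mul_le_mul_right N (by simpa [Nat.lt_succ_iff] using ht)
  have hsN : (s + 1) * N ≤ t * N := Nat.mul_le_mul_right N hlt
  refine ⟨β + s * N, β + t * N, by rw [add_one_mul] at hsN; omega, fun j ⟨hj₁, hj₂⟩ => ?_, heq⟩
  have := hβ (j - β) (by omega)
  rwa [Nat.add_sub_cancel' (by omega)] at this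

theorem Thick.exists_Icc_subset_map_eq_const {T : Set ℕ} {C : Type*} (hT : Thick T) {χ : ℕ → C}
    (hχ : (range χ).Finite) : ∃ c, ∀ N, ∃ p q, p + N ≤ q ∧ Icc p q ⊆ T ∧ χ p = c ∧ χ q = c := by
  choose p q hpq hpqT hχpq using hT.exists_Icc_subset_map_eq hχ
  have := hχ.to_subtype
  obtain ⟨c, hc⟩ := Finite.exists_infinite_fiber fun N => (⟨χ (p N), mem_range_self _⟩ : range χ)
  refine ⟨c, fun N => ?_⟩
  obtain ⟨M, hM, hNM⟩ := (Set.infinite_coe_iff.1 hc).exists_gt N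
  have hMc : χ (p M) = c := congrArg Subtype.val hM
  exact ⟨p M, q M, by linarith [hpq M], hpqT M, hMc, hχpq M ▸ hMc⟩

theorem thick_iUnion_Icc {P Q : ℕ → ℕ} (hPQ : ∀ k, P k + k ≤ Q k) :
    Thick (⋃ k, Icc (P k) (Q k)) :=
  fun n => ⟨P n, fun i hi => mem_iUnion.2 ⟨n, by have := hPQ n; simp only [mem_Icc]; omega⟩⟩

theorem iUnion_Icc_succ_cases (P Q : ℕ → ℕ) (i : ℕ) :
    (∃ k, P k ≤ i ∧ i < Q k) ∨ ((i ∈ ⋃ k, Icc (P k) (Q k) → i ∈ range Q) ∧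
      (i + 1 ∈ ⋃ k, Icc (P k) (Q k) → i + 1 ∈ range P)) := by
  simp only [mem_iUnion, mem_Icc, mem_range]
  by_cases hin : ∃ k, P k ≤ i ∧ i < Q k
  · exact Or.inl hin
  push Not at hin
  refine Or.inr ⟨fun ⟨k, hk₁, hk₂⟩ => ⟨k, le_antisymm (hin k hk₁) hk₂⟩, fun ⟨k, hk₁, hk₂⟩ => ⟨k, ?_⟩⟩
  by_contra hk
  have := hin k (by omega)
  omega

end Thick

section Splice

variable {X : Type*} [UniformSpace X] {f : X → X}

theorem pseudoOrbitOn_piecewise {B D : Set (X × X)} (hB : B ∈ 𝓤 X) (hBD : B ○ B ○ B ⊆ D)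
    {S : Set ℕ} [DecidablePred (· ∈ S)] {x ℓ : ℕ → X} (hℓ : PseudoOrbitOn f B ℓ univ)
    (hS : ∀ i, (i ∈ S ∧ i + 1 ∈ S ∧ (f (x i), x (i + 1)) ∈ D) ∨
      ((i ∈ S → (f (x i), f (ℓ i)) ∈ B) ∧ (i + 1 ∈ S → (ℓ (i + 1), x (i + 1)) ∈ B))) :
    PseudoOrbitOn f D (S.piecewise x ℓ) univ := by
  intro i _
  rcases hS i with ⟨hi, hi₁, hx⟩ | ⟨hi, hi₁⟩
  · simpa [hi, hi₁] using hx
  refine hBD (prodMk_mem_comp (prodMk_mem_comp ?_ (hℓ i trivial)) ?_)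
  · by_cases h : i ∈ S
    · simpa [h] using hi h
    · simpa [h] using refl_mem_uniformity hB
  · by_cases h : i + 1 ∈ S
    · simpa [h] using hi₁ h
    · simpa [h] using refl_mem_uniformity hB

theorem pseudoOrbitOn_piecewise_iUnion_Icc {B D : Set (X × X)} (hB : B ∈ 𝓤 X)
    (hBD : B ○ B ○ B ⊆ D) {T : Set ℕ} {P Q : ℕ → ℕ} (hPQT : ∀ k, Icc (P k) (Q k) ⊆ T)
    [DecidablePred (· ∈ ⋃ k, Icc (P k) (Q k))] {x ℓ : ℕ → X} (hx : PseudoOrbitOn f D x T)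
    (hℓ : PseudoOrbitOn f B ℓ univ)
    (hends : ∀ a ∈ range P ∪ range Q, (f (x a), f (ℓ a)) ∈ B ∧ (ℓ a, x a) ∈ B) :
    PseudoOrbitOn f D ((⋃ k, Icc (P k) (Q k)).piecewise x ℓ) univ := by
  refine pseudoOrbitOn_piecewise hB hBD hℓ fun i => ?_
  rcases iUnion_Icc_succ_cases P Q i with ⟨k, hki, hkQ⟩ | ⟨hQi, hPi⟩
  · exact Or.inl ⟨mem_iUnion.2 ⟨k, hki, hkQ.le⟩, mem_iUnion.2 ⟨k, by omega, hkQ⟩,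
      hx i (hPQT k ⟨hki, hkQ.le⟩)⟩
  · exact Or.inr ⟨fun h => (hends i (Or.inr (hQi h))).1, fun h => (hends _ (Or.inl (hPi h))).2⟩

end Splice

theorem finite_range_prod_mod {J : Set ℕ} (hJ : J.Finite) {ν n : ℕ → ℕ} (hν : ∀ j, ν j ∈ J)
    (hn : ∀ i, 0 < n i) : (range fun j => (ν j, j % n (ν j))).Finite :=
  (hJ.biUnion fun i _ => (finite_singleton i).prod (finite_Iio (n i))).subset <| by
    rintro _ ⟨j, rfl⟩
    exact mem_biUnion (hν j) ⟨rfl, Nat.mod_lt _ (hn _)⟩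

theorem exists_finite_index_net {ι X : Type*} [UniformSpace X] [CompactSpace X] (x : ι → X)
    {V : Set (X × X)} (hV : V ∈ 𝓤 X) : ∃ J : Set ι, J.Finite ∧ ∀ j, ∃ i ∈ J, (x j, x i) ∈ V := by
  obtain ⟨t, htx, htfin, hcover⟩ := totallyBounded_iff_subset.1
    (isCompact_univ.totallyBounded.subset (subset_univ (range x))) V hV
  rw [← image_univ] at htx hcover
  obtain ⟨J, -, hJ, hJcover⟩ := exists_subset_image_finite_and
    (p := fun t => x '' univ ⊆ ⋃ y ∈ t, {z | (z, y) ∈ V}) |>.1 ⟨t, htx, htfin, hcover⟩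
  refine ⟨J, hJ, fun j => ?_⟩
  simpa using hJcover (mem_image_of_mem x (mem_univ j))

theorem trace_on_thick_of_trace_in_CR_general
    {X : Type*} [UniformSpace X] [CompactSpace X]
    (f : X → X) (hf : Continuous f)
    (E D : Set (X × X)) (hD : D ∈ uniformity X)
    (htr : ∀ x : ℕ → X, (∀ i : ℕ, x i ∈ CR f) → PseudoOrbitOn f D x Set.univ →
      ∃ z : X, TracedOn f E x z Set.univ)
    (T : Set ℕ) (hT : Thick T)
    (x : ℕ → X) (hxCR : ∀ i : ℕ, x i ∈ CR f) (hx : PseudoOrbitOn f D x T) :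
    ∃ T' : Set ℕ, T' ⊆ T ∧ Thick T' ∧ ∃ z : X, ∀ j ∈ T', (f^[j] z, x j) ∈ E := by
  classical
  obtain ⟨B, hB, -, hBD⟩ := comp_comp_symm_mem_uniformity_sets hD
  obtain ⟨J, hJ, hnet⟩ := exists_finite_index_net x <|
    inter_mem (CompactSpace.uniformContinuous_of_continuous hf hB) (tendsto_swap_uniformity hB)
  choose ν hνJ hν using hnet
  choose n hn ℓ hℓCR hℓ hℓw using fun j => (dChainIn_CR_of_mem_CR hf (hxCR j) hB).exists_periodic
  -- colour `j` by a net point near `x j` and the phase of `j` along that point's loop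
  obtain ⟨c, hc⟩ := hT.exists_Icc_subset_map_eq_const (finite_range_prod_mod hJ hνJ hn)
  choose P Q hPQ hPQT hP hQ using hc
  set i₀ := ν (P 0)
  set L := ℓ i₀ (P 0)
  set S := ⋃ k, Icc (P k) (Q k)
  have hends : ∀ a ∈ range P ∪ range Q, (f (x a), f (L a)) ∈ B ∧ (L a, x a) ∈ B := by
    intro a ha
    have hcol : (ν a, a % n (ν a)) = (i₀, P 0 % n i₀) := by
      rcases ha with ⟨k, rfl⟩ | ⟨k, rfl⟩
      exacts [(hP k).trans (hP 0).symm, (hQ k).trans (hP 0).symm]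
    obtain ⟨hνa, hmod⟩ := Prod.mk.inj hcol
    rw [hνa] at hmod
    rw [show L a = x i₀ from hℓw i₀ (P 0) a hmod, ← hνa]
    exact hν a
  have hy : PseudoOrbitOn f D (S.piecewise x L) univ :=
    pseudoOrbitOn_piecewise_iUnion_Icc hB hBD hPQT hx (hℓ i₀ (P 0)) hends
  obtain ⟨z, hz⟩ := htr _ (fun i => by by_cases h : i ∈ S <;> simp [h, hxCR, L, hℓCR]) hy
  exact ⟨S, iUnion_subset hPQT, thick_iUnion_Icc hPQ, z, fun j hj => by
    simpa [hj] using hz j trivial⟩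

/-- if every D-pseudo orbit in CR(f) can be E-traced, then D-pseudo orbits
in CR(f) on thick sets can be E-traced on thick subsets. -/
theorem trace_on_thick_of_trace_in_CR
    {X : Type*} [UniformSpace X] [CompactSpace X]
    (f : X → X) (hf : Continuous f) (hsurj : Function.Surjective f)
    (E D : Set (X × X)) (hE : E ∈ uniformity X) (hD : D ∈ uniformity X)
    (htr : ∀ x : ℕ → X, (∀ i : ℕ, x i ∈ CR f) → PseudoOrbitOn f D x Set.univ →
      ∃ z : X, TracedOn f E x z Set.univ)
    (T : Set ℕ) (hT : Thick T)
    (x : ℕ → X) (hxCR : ∀ i : ℕ, x i ∈ CR f) (hx : PseudoOrbitOn f D x T) :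
    ∃ T' : Set ℕ, T' ⊆ T ∧ Thick T' ∧ ∃ z : X, ∀ j ∈ T', (f^[j] z, x j) ∈ E :=
  trace_on_thick_of_trace_in_CR_general f hf E D hD htr T hT x hxCR hx
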